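/- arXiv:1602.04059 — 2 statements merged into one kernel-verified Lean document; each statement's English description precedes it below -/
import Mathlib

section
/- For any two nonempty graphs G and H with v_H ≥ 3, the following three statements are equivalent: (i) H is strictly balanced with respect to d_2(G,·); (ii) m_2(G,H) < m*(H); (iii) m_2(G) < x*(H). -/
open scoped Classical

namespace AsymRamsey

/-- The 2-density `d₂` of a graph with `v` vertices and `e` edges. -/
noncomputable def d2 (v e : ℕ) : ℝ :=
  if e = 0 then 0 else if 3 ≤ v then ((e : ℝ) - 1) / ((v : ℝ) - 2) else 1 / 2

/-- `m₂(H)`: the maximum of `d₂` over all subgraphs of `H`. -/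
noncomputable def m2 {V : Type*} [Fintype V] (H : SimpleGraph V) : ℝ :=
  sSup {x : ℝ | ∃ J : H.Subgraph, x = d2 J.verts.ncard J.edgeSet.ncard}

/-- The asymmetric 2-density `d₂(G, ·)` applied to a graph with `v` vertices and `e` edges. -/
noncomputable def d2a {V : Type*} [Fintype V] (G : SimpleGraph V) (v e : ℕ) : ℝ :=
  if G.edgeSet.ncard = 0 ∨ e = 0 then 0 else (e : ℝ) / ((v : ℝ) - 2 + 1 / m2 G)

/-- `m₂(G,H)`: the maximum of `d₂(G,·)` over all subgraphs of `H`. -/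
noncomputable def m2a {V W : Type*} [Fintype V] [Fintype W]
    (G : SimpleGraph V) (H : SimpleGraph W) : ℝ :=
  sSup {x : ℝ | ∃ J : H.Subgraph, x = d2a G J.verts.ncard J.edgeSet.ncard}

/-- `H` is balanced with respect to `d₂(G,·)`. -/
def BalancedW {V W : Type*} [Fintype V] [Fintype W]
    (G : SimpleGraph V) (H : SimpleGraph W) : Prop :=
  m2a G H = d2a G (Fintype.card W) H.edgeSet.ncard

/-- `H` is strictly balanced with respect to `d₂(G,·)`. -/
def StrictlyBalancedW {V W : Type*} [Fintype V] [Fintype W]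
    (G : SimpleGraph V) (H : SimpleGraph W) : Prop :=
  BalancedW G H ∧
    ∀ J : H.Subgraph, J ≠ ⊤ → d2a G J.verts.ncard J.edgeSet.ncard < m2a G H

/-- `m*(H) = min {(e_H - e_J)/(v_H - v_J) : J ⊆ H, 2 ≤ v_J < v_H}`. -/
noncomputable def mStar {W : Type*} [Fintype W] (H : SimpleGraph W) : ℝ :=
  sInf {x : ℝ | ∃ J : H.Subgraph, 2 ≤ J.verts.ncard ∧ J.verts.ncard < Fintype.card W ∧
    x = ((H.edgeSet.ncard : ℝ) - (J.edgeSet.ncard : ℝ)) /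
        ((Fintype.card W : ℝ) - (J.verts.ncard : ℝ))}

/-- `x*(H) = m*(H) / (e_H - m*(H)(v_H - 2))`. -/
noncomputable def xStar {W : Type*} [Fintype W] (H : SimpleGraph W) : ℝ :=
  mStar H / ((H.edgeSet.ncard : ℝ) - mStar H * ((Fintype.card W : ℝ) - 2))

/-- A graph is a matching if it has maximum degree at most 1. -/
def IsMatchingGraph {V : Type*} (G : SimpleGraph V) : Prop :=
  ∀ v : V, (G.neighborSet v).ncard ≤ 1

/-- `f` is (the embedding of) a copy of `H` in `F`. -/
def IsCopy {W V : Type*} (H : SimpleGraph W) (F : SimpleGraph V) (f : W ↪ V) : Prop :=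
  ∀ ⦃u v : W⦄, H.Adj u v → F.Adj (f u) (f v)

/-- The edges of the copy of `H` given by the embedding `f`. -/
def copyEdges {W V : Type*} (H : SimpleGraph W) (f : W ↪ V) : Set (Sym2 V) :=
  Sym2.map (⇑f) '' H.edgeSet

/-- `E_H(F)`: the union of the edge sets of all copies of `H` in `F` (the `H`-edges of `F`). -/
def HEdges {W V : Type*} (H : SimpleGraph W) (F : SimpleGraph V) : Set (Sym2 V) :=
  ⋃ f ∈ {f : W ↪ V | IsCopy H F f}, copyEdges H f

/-- `F → (G,H)`: every red-blue (true/false) coloring of the edges of `F` yields a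
red copy of `G` or a blue copy of `H`. -/
def Arrows {α β γ : Type*} (F : SimpleGraph α) (G : SimpleGraph β) (H : SimpleGraph γ) : Prop :=
  ∀ c : Sym2 α → Bool,
    (∃ f : β ↪ α, IsCopy G F f ∧ ∀ e ∈ G.edgeSet, c (Sym2.map (⇑f) e) = true) ∨
    (∃ f : γ ↪ α, IsCopy H F f ∧ ∀ e ∈ H.edgeSet, c (Sym2.map (⇑f) e) = false)

/-- `F` is Ramsey-critical for the pair `(G,H)`. -/
def Critical {α β γ : Type*} (F : SimpleGraph α) (G : SimpleGraph β) (H : SimpleGraph γ) : Prop :=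
  Arrows F G H ∧ ∀ F' : F.Subgraph, F' ≠ ⊤ → ¬ Arrows F'.coe G H

/-- The probability that the binomial random graph `G_{n,p}` satisfies property `A`. -/
noncomputable def gnpProb (n : ℕ) (p : ℝ) (A : SimpleGraph (Fin n) → Prop) : ℝ :=
  ∑ S ∈ (Finset.univ.filter fun e : Sym2 (Fin n) => ¬ e.IsDiag).powerset,
    if A (SimpleGraph.fromEdgeSet (↑S)) then p ^ S.card * (1 - p) ^ (n.choose 2 - S.card) else 0

/-- The edges of `F` induced on a vertex set `V`. -/
def EdgesIn {n : ℕ} (F : SimpleGraph (Fin n)) (V : Finset (Fin n)) : Set (Sym2 (Fin n)) :=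
  {e ∈ F.edgeSet | ∀ v ∈ e, v ∈ V}

/-- `F` is `(ρ,d)`-dense. -/
def RhoDDense (n : ℕ) (ρ d : ℝ) (F : SimpleGraph (Fin n)) : Prop :=
  ∀ V : Finset (Fin n), ρ * (n : ℝ) ≤ (V.card : ℝ) →
    d * (n.choose 2 : ℝ) ≤ ((EdgesIn F V).ncard : ℝ)

/-- The general density measure `d_{a,b}`. -/
noncomputable def dab (a b : ℝ) (v e : ℕ) : ℝ :=
  if e = 0 then 0 else ((e : ℝ) - a) / ((v : ℝ) - b)

/-- `m_{a,b}(H)`: the maximum of `d_{a,b}` over all subgraphs of `H`. -/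
noncomputable def mab {W : Type*} [Fintype W] (a b : ℝ) (H : SimpleGraph W) : ℝ :=
  sSup {x : ℝ | ∃ J : H.Subgraph, x = dab a b J.verts.ncard J.edgeSet.ncard}

/-- `H` is balanced with respect to `d_{a,b}`. -/
def BalancedAB {W : Type*} [Fintype W] (a b : ℝ) (H : SimpleGraph W) : Prop :=
  mab a b H = dab a b (Fintype.card W) H.edgeSet.ncard

/-- `H` is strictly balanced with respect to `d_{a,b}`. -/
def StrictlyBalancedAB {W : Type*} [Fintype W] (a b : ℝ) (H : SimpleGraph W) : Prop :=
  BalancedAB a b H ∧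
    ∀ J : H.Subgraph, J ≠ ⊤ → dab a b J.verts.ncard J.edgeSet.ncard < mab a b H

end AsymRamsey

/-! Write `c = 1 / m₂(G)`, so that `d₂(G,J) = e_J / (v_J - 2 + c)`. For `2 ≤ v_J < v_H` the
mediant inequality, applied to `v_H - 2 + c = (v_J - 2 + c) + (v_H - v_J)`, shows that
`d₂(G,J) < d₂(G,H)` exactly when `d₂(G,H) < (e_H - e_J) / (v_H - v_J)`; every other proper
subgraph (edgeless, or spanning with fewer edges) lies below `d₂(G,H)` anyway. So `H` is strictly
balanced iff `d₂(G,H) < m*(H)`, and then `m₂(G,H) = d₂(G,H)`, which gives (ii). Unwinding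
`e_H / (v_H - 2 + c) < m*(H)` gives (iii); the denominator of `x*(H)` is positive because a single
edge of `H` already gives `m*(H) ≤ (e_H - 1) / (v_H - 2)`. -/

lemma Set.finite_setOf_exists_eq {ι α : Type*} [Finite ι] (f : ι → α) :
    {x | ∃ i, x = f i}.Finite :=
  (Set.finite_range f).subset fun _ ⟨i, hi⟩ => ⟨i, hi.symm⟩

lemma div_lt_div_add_iff_div_add_lt_sub_div {a b e m : ℝ} (ha : 0 < a) (hb : 0 < b) :
    e / a < m / (a + b) ↔ m / (a + b) < (m - e) / b := by
  rw [div_lt_div_iff₀ ha (add_pos ha hb), div_lt_div_iff₀ (add_pos ha hb) hb]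
  constructor <;> intro h <;> linarith

lemma div_add_inv_lt_iff_lt_div_sub {μ b m M : ℝ} (hμ : 0 < μ) (hb : 0 < b + 1 / μ)
    (hD : 0 < m - M * b) : m / (b + 1 / μ) < M ↔ μ < M / (m - M * b) := by
  rw [div_lt_iff₀ hb, lt_div_iff₀ hD, mul_add, ← sub_lt_iff_lt_add', mul_one_div,
    lt_div_iff₀ hμ, mul_comm]

namespace SimpleGraph.Subgraph

variable {W : Type*} {H : SimpleGraph W}

lemma exists_ncard_verts_eq_two_ncard_edgeSet_eq_one (hH : H.edgeSet.Nonempty) :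
    ∃ J : H.Subgraph, J.verts.ncard = 2 ∧ J.edgeSet.ncard = 1 := by
  obtain ⟨e, he⟩ := hH
  induction e using Sym2.ind with
  | _ u v =>
    refine ⟨H.subgraphOfAdj he, Set.ncard_pair he.ne, ?_⟩
    rw [H.edgeSet_subgraphOfAdj he, Set.ncard_singleton]

lemma two_le_ncard_verts [Finite W] {J : H.Subgraph} (hJ : J.edgeSet.ncard ≠ 0) :
    2 ≤ J.verts.ncard := by
  obtain ⟨e, he⟩ := Set.nonempty_of_ncard_ne_zero hJ
  induction e using Sym2.ind with
  | _ u v =>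
    exact (Set.one_lt_ncard_iff).2 ⟨u, v, he.fst_mem, he.snd_mem, (J.adj_sub he).ne⟩

@[simp]
lemma ncard_edgeSet_top : (⊤ : H.Subgraph).edgeSet.ncard = H.edgeSet.ncard := rfl

variable [Fintype W]

@[simp]
lemma ncard_verts_top : (⊤ : H.Subgraph).verts.ncard = Fintype.card W := by
  rw [verts_top, Set.ncard_univ, Nat.card_eq_fintype_card]

lemma ncard_verts_le (J : H.Subgraph) : J.verts.ncard ≤ Fintype.card W :=
  Nat.card_eq_fintype_card (α := W) ▸ Set.ncard_le_card _

lemma ncard_edgeSet_lt_of_ncard_verts_eq {J : H.Subgraph} (hJ : J ≠ ⊤)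
    (hv : J.verts.ncard = Fintype.card W) : J.edgeSet.ncard < H.edgeSet.ncard := by
  refine Set.ncard_lt_ncard (J.edgeSet_subset.ssubset_of_ne fun he => hJ ?_)
  have hverts : J.verts = Set.univ :=
    Set.eq_of_subset_of_ncard_le (Set.subset_univ _) (by simp [hv]) (Set.toFinite _)
  refine Subgraph.ext hverts ?_
  ext u v
  rw [← Subgraph.mem_edgeSet, he, SimpleGraph.mem_edgeSet, top_adj]

end SimpleGraph.Subgraph

namespace AsymRamsey

section Densities

open SimpleGraph

variable {V W : Type*} [Fintype V] [Fintype W] {G : SimpleGraph V} {H : SimpleGraph W}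

lemma m2_pos (hG : G.edgeSet.Nonempty) : 0 < m2 G := by
  obtain ⟨J, hv, he⟩ := Subgraph.exists_ncard_verts_eq_two_ncard_edgeSet_eq_one hG
  have hJ : d2 J.verts.ncard J.edgeSet.ncard ≤ m2 G :=
    le_csSup (Set.finite_setOf_exists_eq _).bddAbove ⟨J, rfl⟩
  rw [hv, he] at hJ
  norm_num [d2] at hJ
  linarith

lemma d2a_eq (hG : G.edgeSet.Nonempty) (v e : ℕ) :
    d2a G v e = (e : ℝ) / ((v : ℝ) - 2 + 1 / m2 G) := by
  have hGcard : G.edgeSet.ncard ≠ 0 := (Set.ncard_pos (Set.toFinite _)).2 hG |>.ne'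
  by_cases he : e = 0 <;> simp [d2a, hGcard, he]

lemma sub_two_add_inv_m2_pos (hG : G.edgeSet.Nonempty) {v : ℕ} (hv : 2 ≤ v) :
    0 < (v : ℝ) - 2 + 1 / m2 G := by
  have hv' : (2 : ℝ) ≤ v := by exact_mod_cast hv
  have := m2_pos hG
  positivity

lemma d2a_pos (hG : G.edgeSet.Nonempty) {v e : ℕ} (hv : 2 ≤ v) (he : e ≠ 0) : 0 < d2a G v e := by
  rw [d2a_eq hG]
  exact div_pos (by exact_mod_cast Nat.pos_of_ne_zero he) (sub_two_add_inv_m2_pos hG hv)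

lemma d2a_lt_d2a_of_lt (hG : G.edgeSet.Nonempty) {v e m : ℕ} (hv : 2 ≤ v) (hem : e < m) :
    d2a G v e < d2a G v m := by
  rw [d2a_eq hG, d2a_eq hG]
  exact div_lt_div_of_pos_right (by exact_mod_cast hem) (sub_two_add_inv_m2_pos hG hv)

lemma d2a_lt_d2a_iff_lt_div (hG : G.edgeSet.Nonempty) {v e n m : ℕ} (hv : 2 ≤ v) (hvn : v < n) :
    d2a G v e < d2a G n m ↔ d2a G n m < ((m : ℝ) - e) / ((n : ℝ) - v) := by
  have hvn' : (v : ℝ) < n := by exact_mod_cast hvn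
  have hsplit : (n : ℝ) - 2 + 1 / m2 G = ((v : ℝ) - 2 + 1 / m2 G) + ((n : ℝ) - v) := by ring
  rw [d2a_eq hG, d2a_eq hG, hsplit]
  exact div_lt_div_add_iff_div_add_lt_sub_div (sub_two_add_inv_m2_pos hG hv) (sub_pos.2 hvn')

lemma d2a_le_m2a (J : H.Subgraph) : d2a G J.verts.ncard J.edgeSet.ncard ≤ m2a G H :=
  le_csSup (Set.finite_setOf_exists_eq _).bddAbove ⟨J, rfl⟩

lemma d2a_top_le_m2a : d2a G (Fintype.card W) H.edgeSet.ncard ≤ m2a G H := by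
  simpa using d2a_le_m2a (G := G) (⊤ : H.Subgraph)

lemma m2a_eq_of_forall_lt (h : ∀ J : H.Subgraph, J ≠ ⊤ →
      d2a G J.verts.ncard J.edgeSet.ncard < d2a G (Fintype.card W) H.edgeSet.ncard) :
    m2a G H = d2a G (Fintype.card W) H.edgeSet.ncard := by
  refine le_antisymm (csSup_le ⟨_, ⊤, rfl⟩ ?_) d2a_top_le_m2a
  rintro _ ⟨J, rfl⟩
  by_cases hJ : J = ⊤
  · simp [hJ]
  · exact (h J hJ).le

lemma strictlyBalancedW_iff : StrictlyBalancedW G H ↔ ∀ J : H.Subgraph, J ≠ ⊤ →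
    d2a G J.verts.ncard J.edgeSet.ncard < d2a G (Fintype.card W) H.edgeSet.ncard := by
  refine ⟨fun ⟨hbal, hlt⟩ J hJ => (hlt J hJ).trans_eq hbal, fun h => ?_⟩
  have hbal := m2a_eq_of_forall_lt h
  exact ⟨hbal, fun J hJ => (h J hJ).trans_eq hbal.symm⟩

lemma finite_mStarSet (H : SimpleGraph W) :
    {x : ℝ | ∃ J : H.Subgraph, 2 ≤ J.verts.ncard ∧ J.verts.ncard < Fintype.card W ∧
      x = ((H.edgeSet.ncard : ℝ) - (J.edgeSet.ncard : ℝ)) /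
        ((Fintype.card W : ℝ) - (J.verts.ncard : ℝ))}.Finite := by
  refine (Set.finite_setOf_exists_eq fun J : H.Subgraph =>
    ((H.edgeSet.ncard : ℝ) - J.edgeSet.ncard) / ((Fintype.card W : ℝ) - J.verts.ncard)).subset ?_
  rintro _ ⟨J, -, -, hx⟩
  exact ⟨J, hx⟩

lemma mStar_le (J : H.Subgraph) (h2 : 2 ≤ J.verts.ncard) (hn : J.verts.ncard < Fintype.card W) :
    mStar H ≤ ((H.edgeSet.ncard : ℝ) - J.edgeSet.ncard) / ((Fintype.card W : ℝ) - J.verts.ncard) :=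
  csInf_le (finite_mStarSet H).bddBelow ⟨J, h2, hn, rfl⟩

lemma lt_mStar_iff (hH : H.edgeSet.Nonempty) (hW : 3 ≤ Fintype.card W) {a : ℝ} :
    a < mStar H ↔ ∀ J : H.Subgraph, 2 ≤ J.verts.ncard → J.verts.ncard < Fintype.card W →
      a < ((H.edgeSet.ncard : ℝ) - J.edgeSet.ncard) / ((Fintype.card W : ℝ) - J.verts.ncard) := by
  obtain ⟨J₁, hv₁, -⟩ := Subgraph.exists_ncard_verts_eq_two_ncard_edgeSet_eq_one hH
  rw [mStar, (finite_mStarSet H).lt_csInf_iff ⟨_, J₁, hv₁.ge, by omega, rfl⟩]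
  constructor
  · exact fun h J h2 hn => h _ ⟨J, h2, hn, rfl⟩
  · rintro h _ ⟨J, h2, hn, rfl⟩
    exact h J h2 hn

lemma mStar_mul_lt (hH : H.edgeSet.Nonempty) (hW : 3 ≤ Fintype.card W) :
    mStar H * ((Fintype.card W : ℝ) - 2) < H.edgeSet.ncard := by
  obtain ⟨J₁, hv₁, he₁⟩ := Subgraph.exists_ncard_verts_eq_two_ncard_edgeSet_eq_one hH
  have hle := mStar_le J₁ hv₁.ge (by omega)
  have hW' : (3 : ℝ) ≤ Fintype.card W := by exact_mod_cast hW
  rw [hv₁, he₁, le_div_iff₀ (by push_cast; linarith)] at hle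
  push_cast at hle
  linarith

lemma forall_d2a_lt_iff_lt_mStar (hG : G.edgeSet.Nonempty) (hH : H.edgeSet.Nonempty)
    (hW : 3 ≤ Fintype.card W) :
    (∀ J : H.Subgraph, J ≠ ⊤ →
      d2a G J.verts.ncard J.edgeSet.ncard < d2a G (Fintype.card W) H.edgeSet.ncard) ↔
    d2a G (Fintype.card W) H.edgeSet.ncard < mStar H := by
  rw [lt_mStar_iff hH hW]
  constructor
  · intro h J h2 hn
    exact (d2a_lt_d2a_iff_lt_div hG h2 hn).1 (h J (by rintro rfl; simp at hn))
  · intro h J hJ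
    by_cases he : J.edgeSet.ncard = 0
    · simpa [d2a, he] using d2a_pos hG (by omega) ((Set.ncard_pos (Set.toFinite _)).2 hH).ne'
    have h2 := J.two_le_ncard_verts he
    rcases J.ncard_verts_le.lt_or_eq with hn | hn
    · exact (d2a_lt_d2a_iff_lt_div hG h2 hn).2 (h J h2 hn)
    · rw [hn]
      exact d2a_lt_d2a_of_lt hG (hn ▸ h2) (J.ncard_edgeSet_lt_of_ncard_verts_eq hJ hn)

lemma m2a_lt_mStar_iff (hG : G.edgeSet.Nonempty) (hH : H.edgeSet.Nonempty)
    (hW : 3 ≤ Fintype.card W) :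
    m2a G H < mStar H ↔ d2a G (Fintype.card W) H.edgeSet.ncard < mStar H :=
  ⟨d2a_top_le_m2a.trans_lt, fun h =>
    (m2a_eq_of_forall_lt ((forall_d2a_lt_iff_lt_mStar hG hH hW).2 h)).trans_lt h⟩

lemma m2_lt_xStar_iff (hG : G.edgeSet.Nonempty) (hH : H.edgeSet.Nonempty)
    (hW : 3 ≤ Fintype.card W) :
    m2 G < xStar H ↔ d2a G (Fintype.card W) H.edgeSet.ncard < mStar H := by
  rw [xStar, d2a_eq hG]
  exact (div_add_inv_lt_iff_lt_div_sub (m2_pos hG) (sub_two_add_inv_m2_pos hG (by omega))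
    (sub_pos.2 (mStar_mul_lt hH hW))).symm

end Densities

/-- Lemma 4: for nonempty graphs `G`, `H` with `v_H ≥ 3`, the following are
equivalent: (i) `H` is strictly balanced w.r.t. `d₂(G,·)`; (ii) `m₂(G,H) < m*(H)`;
(iii) `m₂(G) < x*(H)`. -/
theorem stmt7 {V W : Type*} [Fintype V] [Fintype W]
    (G : SimpleGraph V) (H : SimpleGraph W)
    (hGne : G.edgeSet.Nonempty) (hHne : H.edgeSet.Nonempty) (hW : 3 ≤ Fintype.card W) :
    (StrictlyBalancedW G H ↔ m2a G H < mStar H) ∧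
    (StrictlyBalancedW G H ↔ m2 G < xStar H) := by
  have hbal := strictlyBalancedW_iff.trans (forall_d2a_lt_iff_lt_mStar hGne hHne hW)
  exact ⟨hbal.trans (m2a_lt_mStar_iff hGne hHne hW).symm,
    hbal.trans (m2_lt_xStar_iff hGne hHne hW).symm⟩

end AsymRamsey
end

section
/- Let G and H be nonempty graphs with v_H ≥ 3. If H is strictly balanced with respect to d_2(G,·), then m_2(G) < m_2(H). -/
open scoped Classical

namespace AsymRamsey

lemma m2_bdd {W : Type*} [Fintype W] (H : SimpleGraph W) :
    BddAbove {x : ℝ | ∃ J : H.Subgraph, x = d2 J.verts.ncard J.edgeSet.ncard} := by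
  refine ⟨(Fintype.card (Sym2 W) : ℝ) + 1, ?_⟩
  rintro x ⟨J, rfl⟩
  have hcard : (J.edgeSet.ncard : ℝ) ≤ (Fintype.card (Sym2 W) : ℝ) := by
    have := Set.ncard_le_ncard (Set.subset_univ J.edgeSet) (Set.toFinite _)
    rw [Set.ncard_univ, Nat.card_eq_fintype_card] at this
    exact_mod_cast this
  have hc0 : (0:ℝ) ≤ (Fintype.card (Sym2 W) : ℝ) := by positivity
  unfold d2
  split_ifs with h1 h2
  · linarith
  · have hv : (1:ℝ) ≤ (J.verts.ncard : ℝ) - 2 := by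
      have : (3:ℝ) ≤ (J.verts.ncard : ℝ) := by exact_mod_cast h2
      linarith
    have h0 : (0:ℝ) ≤ (J.edgeSet.ncard : ℝ) - 1 := by
      have : 1 ≤ J.edgeSet.ncard := Nat.one_le_iff_ne_zero.mpr h1
      have : (1:ℝ) ≤ (J.edgeSet.ncard : ℝ) := by exact_mod_cast this
      linarith
    calc ((J.edgeSet.ncard : ℝ) - 1) / ((J.verts.ncard : ℝ) - 2)
        ≤ (J.edgeSet.ncard : ℝ) - 1 := div_le_self h0 hv
      _ ≤ (Fintype.card (Sym2 W) : ℝ) + 1 := by linarith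
  · linarith

lemma half_le_m2 {V : Type*} [Fintype V] {G : SimpleGraph V}
    (hGne : G.edgeSet.Nonempty) : 1 / 2 ≤ m2 G := by
  obtain ⟨e, he⟩ := hGne
  induction e using Sym2.ind with
  | _ u v =>
    rw [SimpleGraph.mem_edgeSet] at he
    refine le_csSup (m2_bdd G) ⟨G.subgraphOfAdj he, ?_⟩
    rw [SimpleGraph.edgeSet_subgraphOfAdj, SimpleGraph.subgraphOfAdj_verts,
      Set.ncard_singleton, Set.ncard_pair he.ne]
    simp [d2]

/-- for nonempty `G`, `H` with `v_H ≥ 3`, if `H` is strictly balanced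
w.r.t. `d₂(G,·)` then `m₂(G) < m₂(H)`. -/
theorem stmt14 {V W : Type*} [Fintype V] [Fintype W]
    (G : SimpleGraph V) (H : SimpleGraph W)
    (hGne : G.edgeSet.Nonempty) (hHne : H.edgeSet.Nonempty) (hW : 3 ≤ Fintype.card W)
    (hbal : StrictlyBalancedW G H) :
    m2 G < m2 H := by
  have hm : 1 / 2 ≤ m2 G := half_le_m2 hGne
  have hmpos : 0 < m2 G := by linarith
  have heG : G.edgeSet.ncard ≠ 0 := ((Set.ncard_pos (Set.toFinite _)).mpr hGne).ne'
  have heH : H.edgeSet.ncard ≠ 0 := ((Set.ncard_pos (Set.toFinite _)).mpr hHne).ne'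
  have heH1 : (1:ℝ) ≤ (H.edgeSet.ncard : ℝ) := by
    exact_mod_cast Nat.one_le_iff_ne_zero.mpr heH
  obtain ⟨e, he⟩ := hHne
  induction e using Sym2.ind with
  | _ u v =>
  rw [SimpleGraph.mem_edgeSet] at he
  set J : H.Subgraph := H.subgraphOfAdj he with hJ
  have hJv : J.verts.ncard = 2 := by
    rw [hJ, SimpleGraph.subgraphOfAdj_verts, Set.ncard_pair he.ne]
  have hJe : J.edgeSet.ncard = 1 := by
    rw [hJ, SimpleGraph.edgeSet_subgraphOfAdj, Set.ncard_singleton]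
  have hJne : J ≠ ⊤ := by
    intro h
    have hv := congrArg (fun K : H.Subgraph => K.verts.ncard) h
    simp only [SimpleGraph.Subgraph.verts_top, Set.ncard_univ,
      Nat.card_eq_fintype_card, hJv] at hv
    omega
  have h1 := hbal.2 J hJne
  rw [hbal.1, hJv, hJe] at h1
  have hd1 : d2a G 2 1 = m2 G := by
    unfold d2a
    rw [if_neg (by push_neg; exact ⟨heG, one_ne_zero⟩)]
    push_cast
    rw [show (2:ℝ) - 2 + 1 / m2 G = 1 / m2 G by ring, one_div_one_div]
  rw [hd1] at h1
  have hD : (0:ℝ) < (Fintype.card W : ℝ) - 2 + 1 / m2 G := by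
    have : (3:ℝ) ≤ (Fintype.card W : ℝ) := by exact_mod_cast hW
    have : (0:ℝ) < 1 / m2 G := by positivity
    linarith
  have hd2 : d2a G (Fintype.card W) H.edgeSet.ncard =
      (H.edgeSet.ncard : ℝ) / ((Fintype.card W : ℝ) - 2 + 1 / m2 G) := by
    unfold d2a
    rw [if_neg (by push_neg; exact ⟨heG, heH⟩)]
  rw [hd2] at h1
  have hcW : (1:ℝ) ≤ (Fintype.card W : ℝ) - 2 := by
    have : (3:ℝ) ≤ (Fintype.card W : ℝ) := by exact_mod_cast hW
    linarith
  have key : m2 G * ((Fintype.card W : ℝ) - 2) + 1 < (H.edgeSet.ncard : ℝ) := by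
    have := (lt_div_iff₀ hD).mp h1
    have hcancel : m2 G * (1 / m2 G) = 1 := by
      field_simp
    nlinarith [this]
  have hlt : m2 G < ((H.edgeSet.ncard : ℝ) - 1) / ((Fintype.card W : ℝ) - 2) := by
    rw [lt_div_iff₀ (by linarith)]
    linarith
  have hd2H : d2 (Fintype.card W) H.edgeSet.ncard =
      ((H.edgeSet.ncard : ℝ) - 1) / ((Fintype.card W : ℝ) - 2) := by
    unfold d2
    rw [if_neg heH, if_pos hW]
  have hmem : d2 (Fintype.card W) H.edgeSet.ncard ∈
      {x : ℝ | ∃ J : H.Subgraph, x = d2 J.verts.ncard J.edgeSet.ncard} := by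
    refine ⟨⊤, ?_⟩
    rw [SimpleGraph.Subgraph.verts_top, SimpleGraph.Subgraph.edgeSet_top,
      Set.ncard_univ, Nat.card_eq_fintype_card]
  calc m2 G < d2 (Fintype.card W) H.edgeSet.ncard := by rw [hd2H]; exact hlt
    _ ≤ m2 H := le_csSup (m2_bdd H) hmem
end AsymRamsey
end
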